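/- Theorem 3: Suppose ε = μ0(A) ∈ (0,1) and d > 0, and let t > 1 be the unique solution of t^ε (t−1)^{1−ε}/(t−1+ε) = e^{−d}. Then the compound outage probability for the class {μ : D(μ0‖μ) ≤ d} equals sup{ μ(A) : D(μ0‖μ) ≤ d } = e^{−d} · (t−1)^{ε−1} · t^{1−ε} · ε. -/

import Mathlib

/-!
The upper bound comes from the Donsker–Varadhan inequality
`∫ f ∂μ0 - log ∫ exp f ∂μ ≤ D(μ0‖μ)`, which is Gibbs' inequality for `μ0` against the exponential
tilt of `μ` by `f`. Testing it on `f = -c·1_A` with `c > 0` shows that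
`D(μ0‖μ) ≤ log (1 - ε + ε e^c) - c ε` forces `μ(A) ≤ ε e^c / (1 - ε + ε e^c)`, and the tilt of
`μ0` by `c·1_A` attains both the divergence and the mass. The parameter `t` of the statement is
given by `e^c = t / (t - 1)`.
-/

open MeasureTheory Real Filter

open scoped Classical in
/-- Kullback–Leibler divergence `D(μ‖ν)` between measures, valued in `EReal`:
infinite unless `μ ≪ ν` and the log-likelihood ratio is `μ`-integrable. -/
noncomputable def klDiv {Ω : Type*} [MeasurableSpace Ω] (μ ν : Measure Ω) : EReal :=
  if μ ≪ ν ∧ Integrable (llr μ ν) μ then ((∫ ω, llr μ ν ω ∂μ : ℝ) : EReal) else ⊤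

lemma exp_indicator_const {α : Type*} {A : Set α} (c : ℝ) (x : α) :
    exp (A.indicator (fun _ ↦ c) x) = 1 + A.indicator (fun _ ↦ exp c - 1) x := by
  by_cases hx : x ∈ A <;> simp [hx]

section

variable {α : Type*} [MeasurableSpace α] {μ ν : Measure α}

lemma klDiv_le_coe_iff {d : ℝ} :
    klDiv μ ν ≤ (d : EReal) ↔ μ ≪ ν ∧ Integrable (llr μ ν) μ ∧ ∫ x, llr μ ν x ∂μ ≤ d := by
  unfold klDiv
  split_ifs with h
  · simp [h]
  · simp only [top_le_iff, EReal.coe_ne_top, false_iff]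
    tauto

theorem integral_sub_log_integral_exp_le_integral_llr [IsProbabilityMeasure μ] [SigmaFinite ν]
    (hμν : μ ≪ ν) (h_int : Integrable (llr μ ν) μ) {f : α → ℝ} (hfμ : Integrable f μ)
    (hfν : Integrable (fun x ↦ exp (f x)) ν) :
    ∫ x, f x ∂μ - log (∫ x, exp (f x) ∂ν) ≤ ∫ x, llr μ ν x ∂μ := by
  have : NeZero ν := ⟨fun h ↦ IsProbabilityMeasure.ne_zero μ (by simpa [h] using hμν)⟩
  have : IsProbabilityMeasure (ν.tilted f) := isProbabilityMeasure_tilted hfν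
  have hgibbs := InformationTheory.integral_llr_add_sub_measure_univ_nonneg
    (hμν.trans (absolutelyContinuous_tilted hfν)) (integrable_llr_tilted_right hμν hfμ h_int hfν)
  rw [integral_llr_tilted_right hμν hfμ hfν h_int] at hgibbs
  simp only [probReal_univ] at hgibbs
  linarith

noncomputable def bernoulliMGF (p c : ℝ) : ℝ := 1 - p + p * exp c

lemma bernoulliMGF_pos {p : ℝ} (hp0 : 0 ≤ p) (hp1 : p ≤ 1) (c : ℝ) : 0 < bernoulliMGF p c := by
  unfold bernoulliMGF
  rcases hp1.lt_or_eq with hlt | rfl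
  · nlinarith [exp_pos c]
  · simpa using exp_pos c

variable {A : Set α}

lemma integrable_exp_indicator_const [IsFiniteMeasure μ] (hA : MeasurableSet A) (c : ℝ) :
    Integrable (fun x ↦ exp (A.indicator (fun _ ↦ c) x)) μ := by
  simp_rw [exp_indicator_const]
  exact (integrable_const 1).add ((integrable_const _).indicator hA)

lemma integral_exp_indicator_const [IsProbabilityMeasure μ] (hA : MeasurableSet A) (c : ℝ) :
    ∫ x, exp (A.indicator (fun _ ↦ c) x) ∂μ = bernoulliMGF (μ.real A) c := by
  simp_rw [exp_indicator_const]
  rw [integral_add (integrable_const 1) ((integrable_const _).indicator hA),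
    integral_indicator_const _ hA, integral_const, probReal_univ, bernoulliMGF, smul_eq_mul,
    smul_eq_mul]
  ring

lemma measureReal_le_of_integral_llr_le {μ0 μ : Measure α} [IsProbabilityMeasure μ0]
    [IsProbabilityMeasure μ] (hA : MeasurableSet A) {c : ℝ} (hc : 0 < c) (hac : μ0 ≪ μ)
    (h_int : Integrable (llr μ0 μ) μ0)
    (h_le : ∫ x, llr μ0 μ x ∂μ0 ≤ log (bernoulliMGF (μ0.real A) c) - c * μ0.real A) :
    μ.real A ≤ μ0.real A * exp c / bernoulliMGF (μ0.real A) c := by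
  set ε := μ0.real A
  set q := μ.real A
  have hM : 0 < bernoulliMGF ε c := bernoulliMGF_pos measureReal_nonneg measureReal_le_one c
  have hM' : 0 < bernoulliMGF q (-c) :=
    bernoulliMGF_pos measureReal_nonneg measureReal_le_one (-c)
  have hdonsker := integral_sub_log_integral_exp_le_integral_llr hac h_int
    ((integrable_const (-c)).indicator hA) (integrable_exp_indicator_const hA (-c))
  rw [integral_exp_indicator_const hA, integral_indicator_const _ hA, smul_eq_mul] at hdonsker
  have hprod : 1 ≤ bernoulliMGF ε c * bernoulliMGF q (-c) := by
    rw [← log_nonneg_iff (by positivity), log_mul hM.ne' hM'.ne']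
    linarith
  have hexp : exp c * exp (-c) = 1 := by rw [← exp_add, add_neg_cancel, exp_zero]
  have hexp1 : 1 < exp c := one_lt_exp_iff.mpr hc
  rw [le_div_iff₀ hM]
  unfold bernoulliMGF at hprod ⊢
  have hscaled : q * (1 - ε + ε * exp c) * (exp c - 1) ≤ ε * exp c * (exp c - 1) := by
    have hmul := mul_le_mul_of_nonneg_left hprod (exp_pos c).le
    have hexpand : exp c * ((1 - ε + ε * exp c) * (1 - q + q * exp (-c)))
        = (1 - ε + ε * exp c) * (exp c - q * exp c + q) := by
      linear_combination q * (1 - ε + ε * exp c) * hexp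
    linarith
  exact le_of_mul_le_mul_right hscaled (by linarith)

lemma klDiv_tilted_indicator [IsProbabilityMeasure μ] (hA : MeasurableSet A) (c : ℝ) :
    klDiv μ (μ.tilted (A.indicator fun _ ↦ c))
      = ((log (bernoulliMGF (μ.real A) c) - c * μ.real A : ℝ) : EReal) := by
  have hf : Integrable (A.indicator fun _ ↦ c) μ := (integrable_const c).indicator hA
  have hexp := integrable_exp_indicator_const (μ := μ) hA c
  have hself : Integrable (llr μ μ) μ := (integrable_congr (llr_self μ)).mpr (integrable_zero _ _ _)
  rw [klDiv, if_pos ⟨absolutelyContinuous_tilted hexp,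
    integrable_llr_tilted_right .rfl hf hself hexp⟩, integral_llr_tilted_right .rfl hf hexp hself,
    integral_congr_ae (llr_self μ), integral_exp_indicator_const hA, integral_indicator_const _ hA]
  simp only [Pi.zero_apply, integral_zero, smul_eq_mul]
  norm_cast
  ring

lemma measureReal_tilted_indicator [IsProbabilityMeasure μ] (hA : MeasurableSet A) (c : ℝ) :
    (μ.tilted (A.indicator fun _ ↦ c)).real A
      = μ.real A * exp c / bernoulliMGF (μ.real A) c := by
  rw [measureReal_def, tilted_apply_eq_ofReal_integral' _ hA,
    ENNReal.toReal_ofReal (setIntegral_nonneg hA fun _ _ ↦ by positivity),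
    integral_exp_indicator_const hA,
    setIntegral_congr_fun hA (g := fun _ ↦ exp c / bernoulliMGF (μ.real A) c)
      fun x hx ↦ by simp only [Set.indicator_of_mem hx],
    setIntegral_const, smul_eq_mul, mul_div_assoc]

theorem isGreatest_measureReal_of_klDiv_le (μ0 : Measure α) [IsProbabilityMeasure μ0]
    (hA : MeasurableSet A) {c : ℝ} (hc : 0 < c) :
    IsGreatest {q : ℝ | ∃ μ : Measure α, IsProbabilityMeasure μ ∧
        klDiv μ0 μ ≤ ((log (bernoulliMGF (μ0.real A) c) - c * μ0.real A : ℝ) : EReal) ∧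
        q = (μ A).toReal}
      (μ0.real A * exp c / bernoulliMGF (μ0.real A) c) := by
  have : IsProbabilityMeasure (μ0.tilted (A.indicator fun _ ↦ c)) :=
    isProbabilityMeasure_tilted (integrable_exp_indicator_const hA c)
  refine ⟨⟨_, this, (klDiv_tilted_indicator hA c).le, (measureReal_tilted_indicator hA c).symm⟩, ?_⟩
  rintro _ ⟨μ, hμ, hkl, rfl⟩
  obtain ⟨hac, h_int, h_le⟩ := klDiv_le_coe_iff.mp hkl
  exact measureReal_le_of_integral_llr_le hA hc hac h_int h_le

end

section Reparametrization

variable {p t : ℝ}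

lemma bernoulliMGF_log_div_sub_one (ht : 1 < t) :
    bernoulliMGF p (log (t / (t - 1))) = (t - 1 + p) / (t - 1) := by
  have ht1 : t - 1 ≠ 0 := by linarith
  rw [bernoulliMGF, exp_log (div_pos (by linarith) (by linarith))]
  field_simp
  ring

lemma log_bernoulliMGF_log_div_sub_one (hp : 0 ≤ p) (ht : 1 < t) :
    log (bernoulliMGF p (log (t / (t - 1)))) - log (t / (t - 1)) * p
      = -log (t ^ p * (t - 1) ^ (1 - p) / (t - 1 + p)) := by
  have ht0 : 0 < t := by linarith
  have ht1 : 0 < t - 1 := by linarith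
  have hs : 0 < t - 1 + p := by linarith
  rw [bernoulliMGF_log_div_sub_one ht, log_div hs.ne' ht1.ne', log_div ht0.ne' ht1.ne',
    log_div (by positivity) hs.ne', log_mul (by positivity) (by positivity), log_rpow ht0,
    log_rpow ht1]
  ring

lemma mul_exp_div_bernoulliMGF_log_div_sub_one (hp : 0 ≤ p) (ht : 1 < t) :
    p * exp (log (t / (t - 1))) / bernoulliMGF p (log (t / (t - 1)))
      = t ^ p * (t - 1) ^ (1 - p) / (t - 1 + p) * (t - 1) ^ (p - 1) * t ^ (1 - p) * p := by
  have ht0 : 0 < t := by linarith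
  have ht1 : 0 < t - 1 := by linarith
  have hs : 0 < t - 1 + p := by linarith
  have htt : t ^ p * t ^ (1 - p) = t := by
    rw [← rpow_add ht0, add_sub_cancel, rpow_one]
  have ht1t1 : (t - 1) ^ (1 - p) * (t - 1) ^ (p - 1) = 1 := by
    rw [← rpow_add ht1, sub_add_sub_cancel, sub_self, rpow_zero]
  rw [bernoulliMGF_log_div_sub_one ht, exp_log (div_pos ht0 ht1)]
  calc p * (t / (t - 1)) / ((t - 1 + p) / (t - 1))
      = (t ^ p * t ^ (1 - p)) * ((t - 1) ^ (1 - p) * (t - 1) ^ (p - 1)) * p / (t - 1 + p) := by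
        rw [htt, ht1t1]
        field_simp
    _ = _ := by ring

end Reparametrization

theorem stmt_14_general {Ω : Type*} [MeasurableSpace Ω] (μ0 : Measure Ω) [IsProbabilityMeasure μ0]
    (A : Set Ω) (hA : MeasurableSet A) (d : ℝ) (t : ℝ) (ht : 1 < t)
    (heq : t ^ (μ0 A).toReal * (t - 1) ^ (1 - (μ0 A).toReal) / (t - 1 + (μ0 A).toReal)
      = Real.exp (-d)) :
    sSup {q : ℝ | ∃ μ : Measure Ω, IsProbabilityMeasure μ ∧ klDiv μ0 μ ≤ (d : EReal) ∧
        q = (μ A).toReal}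
      = Real.exp (-d) * (t - 1) ^ ((μ0 A).toReal - 1) * t ^ (1 - (μ0 A).toReal)
          * (μ0 A).toReal := by
  have hc : 0 < log (t / (t - 1)) := log_pos ((one_lt_div (by linarith)).mpr (by linarith))
  have hε : 0 ≤ μ0.real A := measureReal_nonneg
  have key := isGreatest_measureReal_of_klDiv_le μ0 hA hc
  rw [log_bernoulliMGF_log_div_sub_one hε ht, mul_exp_div_bernoulliMGF_log_div_sub_one hε ht,
    measureReal_def, heq, log_exp, neg_neg] at key
  exact key.csSup_eq

/-- Theorem 3: if `ε = μ0(A) ∈ (0,1)`, `d > 0`, and `t > 1` solves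
`t^ε(t−1)^{1−ε}/(t−1+ε) = e^{−d}`, then
`sup{μ(A) : D(μ0‖μ) ≤ d} = e^{−d}·(t−1)^{ε−1}·t^{1−ε}·ε`. -/
theorem stmt_14 {Ω : Type*} [MeasurableSpace Ω] (μ0 : Measure Ω) [IsProbabilityMeasure μ0]
    (A : Set Ω) (hA : MeasurableSet A) (d : ℝ) (hd : 0 < d)
    (he : (μ0 A).toReal ∈ Set.Ioo (0 : ℝ) 1) (t : ℝ) (ht : 1 < t)
    (heq : t ^ (μ0 A).toReal * (t - 1) ^ (1 - (μ0 A).toReal) / (t - 1 + (μ0 A).toReal)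
      = Real.exp (-d)) :
    sSup {q : ℝ | ∃ μ : Measure Ω, IsProbabilityMeasure μ ∧ klDiv μ0 μ ≤ (d : EReal) ∧
        q = (μ A).toReal}
      = Real.exp (-d) * (t - 1) ^ ((μ0 A).toReal - 1) * t ^ (1 - (μ0 A).toReal)
          * (μ0 A).toReal :=
  stmt_14_general μ0 A hA d t ht heq
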